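/- arXiv:2510.21499 — 5 statements merged into one kernel-verified Lean document; each statement's English description precedes it below -/
import Mathlib

section
/- The product ⋆ on 𝓕 is associative: for all subspaces A, B, C, D of E and all f₁ ∈ 𝓕_{AB}, f₂ ∈ 𝓕_{BC}, f₃ ∈ 𝓕_{CD}, one has (f₁ ⋆ f₂) ⋆ f₃ = f₁ ⋆ (f₂ ⋆ f₃). -/
open scoped Classical

set_option linter.unusedSectionVars false

noncomputable section

namespace Lusztig

variable (E X : Type) [AddCommGroup E] [Module (ZMod 2) E] [Fintype E]
  [Fintype X] [AddAction E X]

/-- The stabilizer of `x` in `E`, as a subset of `E`. -/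
def stabSet (x : X) : Set E := {e : E | e +ᵥ x = x}

/-- `X_A`: the set of points of `X` whose stabilizer in `E` equals `A`. -/
def XA (A : Submodule (ZMod 2) E) : Set X := {x : X | stabSet E X x = (A : Set E)}

/-- `X²_{AB} = X_A × X_B`. -/
def X2 (A B : Submodule (ZMod 2) E) : Set (X × X) := (XA E X A) ×ˢ (XA E X B)

/-- The `E`-orbit of `x` in `X`. -/
def orb (x : X) : Set X := {y : X | ∃ e : E, y = e +ᵥ x}

/-- The `E`-orbit of `(x,y)` for the diagonal action of `E` on `X × X`. -/
def orb2 (x y : X) : Set (X × X) := {q : X × X | ∃ e : E, q = (e +ᵥ x, e +ᵥ y)}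

/-- `O` is an `E`-orbit (for the diagonal action) contained in `X²_{AB}`. -/
def IsOrb2 (A B : Submodule (ZMod 2) E) (O : Set (X × X)) : Prop :=
  ∃ x y : X, x ∈ XA E X A ∧ y ∈ XA E X B ∧ O = orb2 E X x y

/-- The `E × B`-orbit of `(x,y)` for the action `(e,b)·(x,y) = (e+b+x, e+y)`. -/
def orbEB (B : Submodule (ZMod 2) E) (x y : X) : Set (X × X) :=
  {q : X × X | ∃ e b : E, b ∈ B ∧ q = ((e + b) +ᵥ x, e +ᵥ y)}

/-- `M` is an `E × B`-orbit contained in `X²_{AC}` for the action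
`(e,b)·(x,y) = (e+b+x, e+y)`. -/
def IsOrbEB (A B C : Submodule (ZMod 2) E) (M : Set (X × X)) : Prop :=
  ∃ x y : X, x ∈ XA E X A ∧ y ∈ XA E X C ∧ M = orbEB E X B x y

/-- Image under the first projection. -/
def p1 (S : Set (X × X)) : Set X := Prod.fst '' S

/-- Image under the second projection. -/
def p2 (S : Set (X × X)) : Set X := Prod.snd '' S

/-- `U_{ABC} = {(a,b,c) ∈ A × B × C : a + b + c = 0}`. -/
def UABC (A B C : Submodule (ZMod 2) E) : Set (E × E × E) :=
  {t : E × E × E | t.1 ∈ A ∧ t.2.1 ∈ B ∧ t.2.2 ∈ C ∧ t.1 + t.2.1 + t.2.2 = 0}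

/-- `X̄_C`: the set of `E`-orbits contained in `X_C`. -/
def barX (C : Submodule (ZMod 2) E) : Set (Set X) :=
  {s : Set X | ∃ x ∈ XA E X C, s = orb E X x}

/-- The dual (space of linear forms `P → ℤ/2`) of a subspace `P` of `E`. -/
abbrev Dl (P : Submodule (ZMod 2) E) : Type := ↥P →ₗ[ZMod 2] ZMod 2

/-- Restriction of a linear form along an inclusion of subspaces. -/
def res {P Q : Submodule (ZMod 2) E} (h : P ≤ Q) (φ : Dl E Q) : Dl E P :=
  φ.comp (Submodule.inclusion h)

theorem leAB (A B C : Submodule (ZMod 2) E) : A ⊓ B ⊓ C ≤ A ⊓ B := inf_le_left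
theorem leBC (A B C : Submodule (ZMod 2) E) : A ⊓ B ⊓ C ≤ B ⊓ C :=
  le_inf (inf_le_left.trans inf_le_right) inf_le_right
theorem leAC (A B C : Submodule (ZMod 2) E) : A ⊓ B ⊓ C ≤ A ⊓ C :=
  le_inf (inf_le_left.trans inf_le_left) inf_le_right
theorem leBA (A B : Submodule (ZMod 2) E) : A ⊓ B ≤ B ⊓ A := le_inf inf_le_right inf_le_left

/-- The convolution product `𝓕_{AB} × 𝓕_{BC} → 𝓕_{AC}`. -/
def conv (A B C : Submodule (ZMod 2) E)
    (f₁ : (X × X) × Dl E (A ⊓ B) → ℂ) (f₂ : (X × X) × Dl E (B ⊓ C) → ℂ) :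
    (X × X) × Dl E (A ⊓ C) → ℂ :=
  fun p =>
    (∑ᶠ (y : X) (_ : y ∈ XA E X B) (ε₁ : Dl E (A ⊓ B)) (ε₂ : Dl E (B ⊓ C))
        (_ : res E (leAB E A B C) ε₁ + res E (leBC E A B C) ε₂
              + res E (leAC E A B C) p.2 = 0),
        f₁ ((p.1.1, y), ε₁) * f₂ ((y, p.1.2), ε₂)) *
      (Nat.card ↥(A ⊓ B ⊓ C) : ℂ) / (Nat.card ↥(A ⊓ C) : ℂ)

/-- The defining conditions for membership in `𝓕_{AB}`: supported on `X²_{AB}` and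
invariant under the diagonal `E`-action. -/
def MemF (A B : Submodule (ZMod 2) E) (f : (X × X) × Dl E (A ⊓ B) → ℂ) : Prop :=
  (∀ p : (X × X) × Dl E (A ⊓ B), p.1 ∉ X2 E X A B → f p = 0) ∧
  (∀ (e : E) (x y : X) (ε : Dl E (A ⊓ B)), f ((e +ᵥ x, e +ᵥ y), ε) = f ((x, y), ε))

/-- `𝓕_{AB}` as a subspace of the space of all functions. -/
def FAB (A B : Submodule (ZMod 2) E) : Submodule ℂ ((X × X) × Dl E (A ⊓ B) → ℂ) where
  carrier := {f | MemF E X A B f}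
  add_mem' := by
    intro a b ha hb
    exact ⟨fun p hp => by simp [ha.1 p hp, hb.1 p hp],
      fun e x y ε => by simp [Pi.add_apply, ha.2 e x y ε, hb.2 e x y ε]⟩
  zero_mem' := ⟨fun p hp => rfl, fun e x y ε => rfl⟩
  smul_mem' := by
    intro c a ha
    exact ⟨fun p hp => by simp [Pi.smul_apply, ha.1 p hp],
      fun e x y ε => by simp [Pi.smul_apply, ha.2 e x y ε]⟩

/-- `[Ξ]^ε`. -/
def br (A B : Submodule (ZMod 2) E) (Ξ : Set (X × X)) (ε : Dl E (A ⊓ B)) :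
    (X × X) × Dl E (A ⊓ B) → ℂ :=
  fun p => if p.1 ∈ Ξ ∧ p.2 = ε then 1 else 0

/-- The ambient space of `𝓕 = ⊕_{A,B} 𝓕_{AB}` (all summands at once). -/
abbrev FF : Type := ∀ A B : Submodule (ZMod 2) E, (X × X) × Dl E (A ⊓ B) → ℂ

/-- The embedding of the `(A,B)` summand into `𝓕`. -/
def emb (A B : Submodule (ZMod 2) E) (f : (X × X) × Dl E (A ⊓ B) → ℂ) : FF E X :=
  fun A' B' p =>
    if h : A = A' ∧ B = B' then f (p.1, cast (by rw [h.1, h.2]) p.2) else 0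

/-- `𝓕` as a subspace of `FF`: componentwise supported on `X²_{AB}` and `E`-invariant. -/
def FFsub : Submodule ℂ (FF E X) where
  carrier := {g | ∀ A B, MemF E X A B (g A B)}
  add_mem' := by
    intro a b ha hb A B
    exact ⟨fun p hp => by simp [(ha A B).1 p hp, (hb A B).1 p hp],
      fun e x y ε => by simp [(ha A B).2 e x y ε, (hb A B).2 e x y ε]⟩
  zero_mem' := fun A B => ⟨fun p hp => rfl, fun e x y ε => rfl⟩
  smul_mem' := by
    intro c a ha A B
    exact ⟨fun p hp => by simp [(ha A B).1 p hp],
      fun e x y ε => by simp [(ha A B).2 e x y ε]⟩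

/-- The product on `𝓕` (zero between summands `𝓕_{AB}`, `𝓕_{B'C}` with `B ≠ B'`). -/
def mulFF (g h : FF E X) : FF E X :=
  fun A C => ∑ᶠ B : Submodule (ZMod 2) E, conv E X A B C (g A B) (h B C)

/-- The diagonal `Δ_A ⊆ X²_{AA}`. -/
def diagSet (A : Submodule (ZMod 2) E) : Set (X × X) :=
  {q : X × X | q.1 ∈ XA E X A ∧ q.2 = q.1}

/-- The element `∑_A [Δ_A]^0` of `𝓕`. -/
def unitFF : FF E X :=
  ∑ᶠ A : Submodule (ZMod 2) E, emb E X A A (br E X A A (diagSet E X A) 0)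

/-- The map `f ↦ f^#` on `𝓕`. -/
def shFF (g : FF E X) : FF E X :=
  fun A B p => g B A ((p.1.2, p.1.1), res E (leBA E B A) p.2)

/-- `𝒪 • 𝒪'`. -/
def bullet (O O' : Set (X × X)) : Set (X × X) :=
  {q : X × X | ∃ y : X, (q.1, y) ∈ O ∧ (y, q.2) ∈ O'}

/-- `∑_{ε ∈ α̃} [𝓜]^ε ∈ 𝓕_{AC}`, where `α̃` is the fibre of
`(A∩C)* → (A∩B∩C)*` over `α`. -/
def bSum (A B C : Submodule (ZMod 2) E) (M : Set (X × X)) (α : Dl E (A ⊓ B ⊓ C)) :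
    (X × X) × Dl E (A ⊓ C) → ℂ :=
  ∑ᶠ (ε : Dl E (A ⊓ C)) (_ : res E (leAC E A B C) ε = α), br E X A C M ε

/-- The set `𝓑_{oBC} ⊆ 𝓕` (embedded in `FF`). -/
def BoBC (A B C : Submodule (ZMod 2) E) (o : Set X) : Set (FF E X) :=
  {g | ∃ (M : Set (X × X)) (α : Dl E (A ⊓ B ⊓ C)),
      IsOrbEB E X A B C M ∧ p1 X M = o ∧ g = emb E X A C (bSum E X A B C M α)}

/-- The set `𝓑_{oB} = ⊔_C 𝓑_{oBC}`. -/
def BoB (A B : Submodule (ZMod 2) E) (o : Set X) : Set (FF E X) :=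
  ⋃ C : Submodule (ZMod 2) E, BoBC E X A B C o

/-- `[[oB]]`, the `ℂ`-span of `𝓑_{oB}`. -/
def ooB (A B : Submodule (ZMod 2) E) (o : Set X) : Submodule ℂ (FF E X) :=
  Submodule.span ℂ (BoB E X A B o)

/-!
Expanding both sides, each is a sum over `y ∈ X_B`, `z ∈ X_C` and forms `ε₁, ε₂, ε₃` of
`f₁ f₂ f₃`, weighted by the number of forms `η` on `V = A ∩ C` (left side), resp. `V = B ∩ D`
(right side), with prescribed restrictions to two subspaces `P, Q ⊆ V` with
`P ∩ Q = A ∩ B ∩ C ∩ D`. Such `η` exist iff the prescribed forms agree on `P ∩ Q`, which on both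
sides says `ε₁ + ε₂ = ε₃ + ε` on `A ∩ B ∩ C ∩ D`, and then there are `|V| |P ∩ Q| / (|P| |Q|)`
of them. Together with the normalising factors of `⋆`, both sides become
`|A ∩ B ∩ C ∩ D| / |A ∩ D|` times the same sum.
-/

section Restriction

variable {E}

omit [Fintype E]

variable {P Q V : Submodule (ZMod 2) E}

theorem res_add (h : P ≤ Q) (φ ψ : Dl E Q) : res E h (φ + ψ) = res E h φ + res E h ψ := rfl

theorem res_res (h₁ : P ≤ Q) (h₂ : Q ≤ V) (φ : Dl E V) :
    res E h₁ (res E h₂ φ) = res E (h₁.trans h₂) φ := rfl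

theorem res_surjective (h : P ≤ Q) : Function.Surjective (res E h) :=
  LinearMap.dualMap_surjective_of_injective (Submodule.inclusion_injective h)

def resPair (hP : P ≤ V) (hQ : Q ≤ V) : Dl E V →ₗ[ZMod 2] Dl E P × Dl E Q :=
  (Submodule.inclusion hP).dualMap.prod (Submodule.inclusion hQ).dualMap

theorem resPair_apply (hP : P ≤ V) (hQ : Q ≤ V) (η : Dl E V) :
    resPair hP hQ η = (res E hP η, res E hQ η) := rfl

theorem ker_resPair (hP : P ≤ V) (hQ : Q ≤ V) :
    LinearMap.ker (resPair hP hQ)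
      = LinearMap.ker (Submodule.inclusion (sup_le hP hQ)).dualMap := by
  ext η
  simp only [LinearMap.mem_ker, resPair_apply, Prod.mk_eq_zero]
  constructor
  · rintro ⟨hηP, hηQ⟩
    ext ⟨v, hv⟩
    obtain ⟨p, hp, q, hq, rfl⟩ := Submodule.mem_sup.mp hv
    have hp' : η ⟨p, hP hp⟩ = 0 := LinearMap.congr_fun hηP ⟨p, hp⟩
    have hq' : η ⟨q, hQ hq⟩ = 0 := LinearMap.congr_fun hηQ ⟨q, hq⟩
    change η (⟨p, hP hp⟩ + ⟨q, hQ hq⟩) = 0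
    rw [map_add, hp', hq', add_zero]
  · intro hη
    exact ⟨congrArg (res E le_sup_left) hη, congrArg (res E le_sup_right) hη⟩

end Restriction

section Counting

variable {E}

instance (P : Submodule (ZMod 2) E) : Finite (Dl E P) := Module.finite_of_finite (ZMod 2)

instance (P : Submodule (ZMod 2) E) : Fintype (Dl E P) := Fintype.ofFinite _

theorem natCard_eq_two_pow_finrank (M : Type*) [AddCommGroup M] [Module (ZMod 2) M]
    [Module.Finite (ZMod 2) M] : Nat.card M = 2 ^ Module.finrank (ZMod 2) M := by
  rw [Module.natCard_eq_pow_finrank (K := ZMod 2), Nat.card_zmod]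

theorem natCard_sup_mul_natCard_inf (P Q : Submodule (ZMod 2) E) :
    Nat.card ↥(P ⊔ Q) * Nat.card ↥(P ⊓ Q) = Nat.card P * Nat.card Q := by
  simp only [natCard_eq_two_pow_finrank, ← pow_add, Submodule.finrank_sup_add_finrank_inf_eq]

theorem natCast_natCard_ne_zero (P : Submodule (ZMod 2) E) : (Nat.card P : ℂ) ≠ 0 :=
  Nat.cast_ne_zero.mpr Nat.card_pos.ne'

theorem natCard_fiber_eq_natCard_ker {R M N : Type*} [Ring R] [AddCommGroup M] [AddCommGroup N]
    [Module R M] [Module R N] (f : M →ₗ[R] N) (m₀ : M) :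
    Nat.card {m // f m = f m₀} = Nat.card (LinearMap.ker f) :=
  Nat.card_congr
    { toFun := fun m ↦ ⟨m - m₀, by simp [m.2]⟩
      invFun := fun k ↦ ⟨k + m₀, by simp [LinearMap.mem_ker.mp k.2]⟩
      left_inv := fun m ↦ by simp
      right_inv := fun k ↦ by simp }

variable {P Q V W : Submodule (ZMod 2) E}

theorem finrank_ker_resPair_add (hP : P ≤ V) (hQ : Q ≤ V) :
    Module.finrank (ZMod 2) (LinearMap.ker (resPair hP hQ)) + Module.finrank (ZMod 2) ↥(P ⊔ Q)
      = Module.finrank (ZMod 2) V := by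
  have h := LinearMap.finrank_range_add_finrank_ker (Submodule.inclusion (sup_le hP hQ)).dualMap
  rw [LinearMap.range_eq_top.mpr (res_surjective _), finrank_top, Subspace.dual_finrank_eq,
    Subspace.dual_finrank_eq, ← ker_resPair hP hQ] at h
  exact (add_comm _ _).trans h

/-- The range of `resPair` lies in the kernel of `(φ, ψ) ↦ φ|_{P ⊓ Q} - ψ|_{P ⊓ Q}`, and both
have dimension `dim (P ⊔ Q)`. -/
theorem exists_res_eq_and_res_eq (hP : P ≤ V) (hQ : Q ≤ V) {φ : Dl E P} {ψ : Dl E Q}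
    (h : res E (inf_le_left : P ⊓ Q ≤ P) φ = res E inf_le_right ψ) :
    ∃ η : Dl E V, res E hP η = φ ∧ res E hQ η = ψ := by
  let μ : Dl E P × Dl E Q →ₗ[ZMod 2] Dl E (P ⊓ Q) :=
    (Submodule.inclusion inf_le_left).dualMap ∘ₗ LinearMap.fst _ _ _ -
      (Submodule.inclusion inf_le_right).dualMap ∘ₗ LinearMap.snd _ _ _
  have hμ : Function.Surjective μ := fun γ ↦ by
    obtain ⟨φ', rfl⟩ := res_surjective inf_le_left γ
    exact ⟨(φ', 0), sub_zero _⟩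
  have hrange : LinearMap.range (resPair hP hQ) = LinearMap.ker μ := by
    refine Submodule.eq_of_le_of_finrank_eq ?_ ?_
    · rintro _ ⟨η, rfl⟩
      exact sub_self _
    have h₁ := LinearMap.finrank_range_add_finrank_ker (resPair hP hQ)
    have h₂ := LinearMap.finrank_range_add_finrank_ker μ
    have h₃ := finrank_ker_resPair_add hP hQ
    have h₄ := Submodule.finrank_sup_add_finrank_inf_eq P Q
    rw [LinearMap.range_eq_top.mpr hμ, finrank_top, Module.finrank_prod] at h₂
    simp only [Subspace.dual_finrank_eq] at h₁ h₂
    omega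
  obtain ⟨η, hη⟩ : (φ, ψ) ∈ LinearMap.range (resPair hP hQ) :=
    hrange ▸ LinearMap.mem_ker.mpr (sub_eq_zero.mpr h)
  exact ⟨η, Prod.ext_iff.mp hη⟩

theorem natCard_res_fiber_mul (hP : P ≤ V) (hQ : Q ≤ V) {φ : Dl E P} {ψ : Dl E Q}
    (h : res E (inf_le_left : P ⊓ Q ≤ P) φ = res E inf_le_right ψ) :
    Nat.card {η : Dl E V // res E hP η = φ ∧ res E hQ η = ψ} * Nat.card ↥(P ⊔ Q)
      = Nat.card V := by
  obtain ⟨η₀, rfl, rfl⟩ := exists_res_eq_and_res_eq hP hQ h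
  have hfiber : {η : Dl E V // res E hP η = res E hP η₀ ∧ res E hQ η = res E hQ η₀}
      ≃ {η // resPair hP hQ η = resPair hP hQ η₀} :=
    Equiv.subtypeEquivRight fun η ↦ by rw [resPair_apply, resPair_apply, Prod.ext_iff]
  rw [Nat.card_congr hfiber, natCard_fiber_eq_natCard_ker, natCard_eq_two_pow_finrank,
    natCard_eq_two_pow_finrank, natCard_eq_two_pow_finrank, ← pow_add, finrank_ker_resPair_add]

theorem sum_ite_res_eq_and_res_eq (hP : P ≤ V) (hQ : Q ≤ V) (hWP : W ≤ P) (hWQ : W ≤ Q)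
    (hW : P ⊓ Q ≤ W) {p q : Dl E V → Prop} [DecidablePred p] [DecidablePred q]
    {φ : Dl E P} {ψ : Dl E Q} (hp : ∀ η, p η ↔ res E hP η = φ) (hq : ∀ η, q η ↔ res E hQ η = ψ)
    (c : ℂ) :
    ∑ η, (if p η ∧ q η then c else 0) =
      if res E hWQ ψ = res E hWP φ then
        (Nat.card V * Nat.card W / (Nat.card P * Nat.card Q) : ℂ) * c
      else 0 := by
  obtain rfl : W = P ⊓ Q := le_antisymm (le_inf hWP hWQ) hW
  have hcard : (Finset.univ.filter fun η ↦ p η ∧ q η).card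
      = Nat.card {η : Dl E V // res E hP η = φ ∧ res E hQ η = ψ} := by
    rw [← Fintype.card_subtype, ← Nat.card_eq_fintype_card]
    exact Nat.card_congr (Equiv.subtypeEquivRight fun η ↦ and_congr (hp η) (hq η))
  rw [← Finset.sum_filter, Finset.sum_const, nsmul_eq_mul, hcard]
  split_ifs with hc
  · have hfiber := natCard_res_fiber_mul hP hQ hc.symm
    have hsup := natCard_sup_mul_natCard_inf P Q
    congr 1
    rw [eq_div_iff (mul_ne_zero (natCast_natCard_ne_zero P) (natCast_natCard_ne_zero Q))]
    exact_mod_cast (by rw [← hsup, ← hfiber]; ring)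
  · suffices IsEmpty {η : Dl E V // res E hP η = φ ∧ res E hQ η = ψ} by simp
    exact ⟨fun ⟨η, hφ, hψ⟩ ↦ hc (by rw [← hφ, ← hψ, res_res, res_res])⟩

end Counting

section CharTwo

variable {G : Type*} [AddCommGroup G] [Module (ZMod 2) G] {a b c d : G}

theorem _root_.ZModModule.add_add_eq_zero_iff_left : a + b + c = 0 ↔ a = b + c := by
  rw [add_assoc, add_eq_zero_iff_eq_neg, ZModModule.neg_eq_self]

theorem _root_.ZModModule.add_add_eq_zero_iff_middle : a + b + c = 0 ↔ b = a + c := by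
  rw [add_right_comm, add_eq_zero_iff_neg_eq, ZModModule.neg_eq_self, eq_comm]

theorem _root_.ZModModule.add_add_eq_zero_iff_right : a + b + c = 0 ↔ c = a + b := by
  rw [add_eq_zero_iff_neg_eq, ZModModule.neg_eq_self, eq_comm]

theorem _root_.ZModModule.add_eq_add_iff_add_eq_add : b + c = a + d ↔ a + b = c + d := by
  rw [← sub_eq_zero, ← sub_eq_zero (a := a + b), ZModModule.sub_eq_add, ZModModule.sub_eq_add,
    show b + c + (a + d) = a + b + (c + d) by abel]

end CharTwo

section Convolution

variable {E X}

def convSum (A B C : Submodule (ZMod 2) E)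
    (f₁ : (X × X) × Dl E (A ⊓ B) → ℂ) (f₂ : (X × X) × Dl E (B ⊓ C) → ℂ) :
    (X × X) × Dl E (A ⊓ C) → ℂ :=
  fun p ↦ ∑ y with y ∈ XA E X B, ∑ ε₁ : Dl E (A ⊓ B), ∑ ε₂ : Dl E (B ⊓ C),
    if res E (leAB E A B C) ε₁ + res E (leBC E A B C) ε₂ + res E (leAC E A B C) p.2 = 0
    then f₁ ((p.1.1, y), ε₁) * f₂ ((y, p.1.2), ε₂) else 0

def convSum₃ (A B C D : Submodule (ZMod 2) E) (f₁ : (X × X) × Dl E (A ⊓ B) → ℂ)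
    (f₂ : (X × X) × Dl E (B ⊓ C) → ℂ) (f₃ : (X × X) × Dl E (C ⊓ D) → ℂ) :
    (X × X) × Dl E (A ⊓ D) → ℂ :=
  fun p ↦ ∑ y with y ∈ XA E X B, ∑ z with z ∈ XA E X C,
    ∑ ε₁ : Dl E (A ⊓ B), ∑ ε₂ : Dl E (B ⊓ C), ∑ ε₃ : Dl E (C ⊓ D),
      if res E (by intro v; simp +contextual : A ⊓ B ⊓ C ⊓ D ≤ A ⊓ B) ε₁
          + res E (by intro v; simp +contextual : A ⊓ B ⊓ C ⊓ D ≤ B ⊓ C) ε₂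
          = res E (by intro v; simp +contextual : A ⊓ B ⊓ C ⊓ D ≤ C ⊓ D) ε₃
          + res E (by intro v; simp +contextual : A ⊓ B ⊓ C ⊓ D ≤ A ⊓ D) p.2
      then f₁ ((p.1.1, y), ε₁) * f₂ ((y, z), ε₂) * f₃ ((z, p.1.2), ε₃) else 0

variable {A B C D : Submodule (ZMod 2) E}

theorem conv_eq_smul_convSum (f₁ : (X × X) × Dl E (A ⊓ B) → ℂ)
    (f₂ : (X × X) × Dl E (B ⊓ C) → ℂ) :
    conv E X A B C f₁ f₂
      = (Nat.card ↥(A ⊓ B ⊓ C) / Nat.card ↥(A ⊓ C) : ℂ) • convSum A B C f₁ f₂ := by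
  ext p
  rw [conv, Pi.smul_apply, smul_eq_mul, mul_div_assoc, mul_comm,
    finsum_mem_eq_finite_toFinset_sum _ (Set.toFinite _)]
  simp only [finsum_eq_sum_of_fintype, finsum_eq_if]
  congr 1
  exact Finset.sum_congr (by ext; simp) fun _ _ ↦ rfl

theorem convSum_smul_left (c : ℂ) (f₁ : (X × X) × Dl E (A ⊓ B) → ℂ)
    (f₂ : (X × X) × Dl E (B ⊓ C) → ℂ) :
    convSum A B C (c • f₁) f₂ = c • convSum A B C f₁ f₂ := by
  ext p
  simp only [convSum, Pi.smul_apply, smul_eq_mul, Finset.mul_sum, mul_ite_zero, mul_assoc]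

theorem convSum_smul_right (c : ℂ) (f₁ : (X × X) × Dl E (A ⊓ B) → ℂ)
    (f₂ : (X × X) × Dl E (B ⊓ C) → ℂ) :
    convSum A B C f₁ (c • f₂) = c • convSum A B C f₁ f₂ := by
  ext p
  simp only [convSum, Pi.smul_apply, smul_eq_mul, Finset.mul_sum, mul_ite_zero, mul_left_comm]

theorem convSum_convSum_left (f₁ : (X × X) × Dl E (A ⊓ B) → ℂ)
    (f₂ : (X × X) × Dl E (B ⊓ C) → ℂ) (f₃ : (X × X) × Dl E (C ⊓ D) → ℂ) :
    convSum A C D (convSum A B C f₁ f₂) f₃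
      = (Nat.card ↥(A ⊓ C) * Nat.card ↥(A ⊓ B ⊓ C ⊓ D) /
          (Nat.card ↥(A ⊓ C ⊓ D) * Nat.card ↥(A ⊓ B ⊓ C)) : ℂ) • convSum₃ A B C D f₁ f₂ f₃ := by
  have hWP : A ⊓ B ⊓ C ⊓ D ≤ A ⊓ C ⊓ D := by intro v; simp +contextual
  have hWQ : A ⊓ B ⊓ C ⊓ D ≤ A ⊓ B ⊓ C := inf_le_left
  have hW : A ⊓ C ⊓ D ⊓ (A ⊓ B ⊓ C) ≤ A ⊓ B ⊓ C ⊓ D := by intro v; simp +contextual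
  have sum_η : ∀ (a b : Dl E (A ⊓ C ⊓ D)) (c d : Dl E (A ⊓ B ⊓ C)) (k : ℂ),
      ∑ η : Dl E (A ⊓ C), (if res E (leAB E A C D) η + a + b = 0 ∧
          c + d + res E (leAC E A B C) η = 0 then k else 0)
        = if res E hWQ (c + d) = res E hWP (a + b) then
            (Nat.card ↥(A ⊓ C) * Nat.card ↥(A ⊓ B ⊓ C ⊓ D) /
              (Nat.card ↥(A ⊓ C ⊓ D) * Nat.card ↥(A ⊓ B ⊓ C)) : ℂ) * k
          else 0 := fun a b c d k ↦
    sum_ite_res_eq_and_res_eq _ _ hWP hWQ hW (fun _ ↦ ZModModule.add_add_eq_zero_iff_left)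
      (fun _ ↦ ZModModule.add_add_eq_zero_iff_right) k
  ext ⟨⟨x, w⟩, ε⟩
  simp only [convSum, Finset.sum_mul, ite_zero_mul, Finset.ite_sum_zero, ← ite_and]
  -- reorder the summations from `z η ε₃ y ε₁ ε₂` to `y z ε₁ ε₂ ε₃ η`
  simp_rw [Finset.sum_comm (s := (Finset.univ : Finset (Dl E (A ⊓ C))))]
  simp_rw [Finset.sum_comm (s := (Finset.univ : Finset (Dl E (C ⊓ D))))]
  simp_rw [Finset.sum_comm (s := (Finset.univ : Finset (Dl E (A ⊓ C))))]
  rw [Finset.sum_comm]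
  simp only [sum_η, res_add, res_res, Pi.smul_apply, smul_eq_mul, convSum₃, Finset.mul_sum,
    mul_ite_zero]
  rfl

theorem convSum_convSum_right (f₁ : (X × X) × Dl E (A ⊓ B) → ℂ)
    (f₂ : (X × X) × Dl E (B ⊓ C) → ℂ) (f₃ : (X × X) × Dl E (C ⊓ D) → ℂ) :
    convSum A B D f₁ (convSum B C D f₂ f₃)
      = (Nat.card ↥(B ⊓ D) * Nat.card ↥(A ⊓ B ⊓ C ⊓ D) /
          (Nat.card ↥(A ⊓ B ⊓ D) * Nat.card ↥(B ⊓ C ⊓ D)) : ℂ) • convSum₃ A B C D f₁ f₂ f₃ := by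
  have hWP : A ⊓ B ⊓ C ⊓ D ≤ A ⊓ B ⊓ D := by intro v; simp +contextual
  have hWQ : A ⊓ B ⊓ C ⊓ D ≤ B ⊓ C ⊓ D := by intro v; simp +contextual
  have hW : A ⊓ B ⊓ D ⊓ (B ⊓ C ⊓ D) ≤ A ⊓ B ⊓ C ⊓ D := by intro v; simp +contextual
  have sum_η : ∀ (a b : Dl E (A ⊓ B ⊓ D)) (c d : Dl E (B ⊓ C ⊓ D)) (k : ℂ),
      ∑ η : Dl E (B ⊓ D), (if a + res E (leBC E A B D) η + b = 0 ∧
          c + d + res E (leAC E B C D) η = 0 then k else 0)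
        = if res E hWP a + res E hWQ c = res E hWQ d + res E hWP b then
            (Nat.card ↥(B ⊓ D) * Nat.card ↥(A ⊓ B ⊓ C ⊓ D) /
              (Nat.card ↥(A ⊓ B ⊓ D) * Nat.card ↥(B ⊓ C ⊓ D)) : ℂ) * k
          else 0 := fun a b c d k ↦ by
    rw [sum_ite_res_eq_and_res_eq _ _ hWP hWQ hW (fun _ ↦ ZModModule.add_add_eq_zero_iff_middle)
      (fun _ ↦ ZModModule.add_add_eq_zero_iff_right) k]
    simp only [res_add, ZModModule.add_eq_add_iff_add_eq_add (a := res E hWP a)]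
  ext ⟨⟨x, w⟩, ε⟩
  simp only [convSum, Finset.mul_sum, mul_ite_zero, Finset.ite_sum_zero, ← ite_and, ← mul_assoc]
  -- reorder the summations from `y ε₁ η z ε₂ ε₃` to `y z ε₁ ε₂ ε₃ η`
  simp_rw [Finset.sum_comm (s := (Finset.univ : Finset (Dl E (B ⊓ D))))]
  conv_lhs => enter [2, y]; rw [Finset.sum_comm]
  simp only [sum_η, res_res, Pi.smul_apply, smul_eq_mul, convSum₃, Finset.mul_sum, mul_ite_zero]
  rfl

end Convolution

theorem statement0 (A B C D : Submodule (ZMod 2) E)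
    (f₁ : (X × X) × Dl E (A ⊓ B) → ℂ) (f₂ : (X × X) × Dl E (B ⊓ C) → ℂ)
    (f₃ : (X × X) × Dl E (C ⊓ D) → ℂ) :
    conv E X A C D (conv E X A B C f₁ f₂) f₃
      = conv E X A B D f₁ (conv E X B C D f₂ f₃) := by
  simp only [conv_eq_smul_convSum, convSum_smul_left, convSum_smul_right, convSum_convSum_left,
    convSum_convSum_right, smul_smul]
  have cancel : ∀ {p q v : ℂ} (w d : ℂ), p ≠ 0 → q ≠ 0 → v ≠ 0 →
      p / d * (q / v * (v * w / (p * q))) = w / d := fun w d hp hq hv ↦ by field_simp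
  simp only [cancel _ _ (natCast_natCard_ne_zero _) (natCast_natCard_ne_zero _)
    (natCast_natCard_ne_zero _)]

end Lusztig
end
end

section
/- Let A, B, C be subspaces of E and let the group E × B act on X²_{AC} by (e,b)·(x,y) = (e+b+x, e+y). Then the stabilizer of any point (x,y) ∈ X²_{AC} is isomorphic (via (e,b) ↦ (e+b, b, e)) to U_{ABC} := {(a,b,c) ∈ A × B × C : a + b + c = 0}; consequently every E × B-orbit 𝓜 on X²_{AC} has cardinality |𝓜| = |E| · |B| / |U_{ABC}|. -/
open scoped Classical

set_option linter.unusedSectionVars false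

noncomputable section

namespace Lusztig

variable (E X : Type) [AddCommGroup E] [Module (ZMod 2) E] [Fintype E]
  [Fintype X] [AddAction E X]

theorem addSelf (e : E) : e + e = 0 := by
  have h : (2 : ZMod 2) • e = 0 := by
    have : (2 : ZMod 2) = 0 := by decide
    rw [this, zero_smul]
  simpa [two_smul] using h

/-- The twisted action of `E × B` on `X × X`. -/
def twAction (B : Submodule (ZMod 2) E) : AddAction (E × ↥B) (X × X) where
  vadd p q := ((p.1 + ↑p.2) +ᵥ q.1, p.1 +ᵥ q.2)
  zero_vadd q := by
    show ((0 + ((0 : ↥B) : E)) +ᵥ q.1, (0 : E) +ᵥ q.2) = q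
    simp
  add_vadd p p' q := by
    show ((p.1 + p'.1 + ↑(p.2 + p'.2)) +ᵥ q.1, (p.1 + p'.1) +ᵥ q.2)
      = ((p.1 + ↑p.2) +ᵥ ((p'.1 + ↑p'.2) +ᵥ q.1, p'.1 +ᵥ q.2).1,
         p.1 +ᵥ ((p'.1 + ↑p'.2) +ᵥ q.1, p'.1 +ᵥ q.2).2)
    rw [← add_vadd, ← add_vadd]
    have h : p.1 + p'.1 + ↑(p.2 + p'.2) = p.1 + ↑p.2 + (p'.1 + ↑p'.2) := by
      push_cast; abel
    rw [h]

/-- the stabilizer of `(x,y) ∈ X²_{AC}` for the `E × B`-action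
`(e,b)·(x,y) = (e+b+x, e+y)` is isomorphic to `U_{ABC}` via `(e,b) ↦ (e+b, b, e)`;
consequently every `E × B`-orbit `𝓜` on `X²_{AC}` has `|𝓜| = |E|·|B|/|U_{ABC}|`. -/
theorem statement5 (A B C : Submodule (ZMod 2) E) :
    (∀ x y : X, x ∈ XA E X A → y ∈ XA E X C →
      Set.BijOn (fun p : E × E => (p.1 + p.2, p.2, p.1))
        {p : E × E | p.2 ∈ B ∧ (p.1 + p.2) +ᵥ x = x ∧ p.1 +ᵥ y = y}
        (UABC E A B C)) ∧
    ∀ M : Set (X × X), IsOrbEB E X A B C M →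
      (Nat.card ↥M : ℚ) =
        (Nat.card E : ℚ) * (Nat.card ↥B : ℚ) / (Nat.card ↥(UABC E A B C) : ℚ) := by
  have key : ∀ x y : X, x ∈ XA E X A → y ∈ XA E X C →
      Set.BijOn (fun p : E × E => (p.1 + p.2, p.2, p.1))
        {p : E × E | p.2 ∈ B ∧ (p.1 + p.2) +ᵥ x = x ∧ p.1 +ᵥ y = y}
        (UABC E A B C) := by
    intro x y hx hy
    have hxA : ∀ e : E, e +ᵥ x = x ↔ e ∈ A := fun e => Set.ext_iff.mp hx e
    have hyC : ∀ e : E, e +ᵥ y = y ↔ e ∈ C := fun e => Set.ext_iff.mp hy e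
    refine ⟨?_, ?_, ?_⟩
    · rintro ⟨e, b⟩ ⟨hb, hxx, hyy⟩
      refine ⟨(hxA _).mp hxx, hb, (hyC _).mp hyy, ?_⟩
      show e + b + b + e = 0
      rw [add_assoc e b b, addSelf E, add_zero, addSelf E]
    · rintro ⟨e, b⟩ _ ⟨e', b'⟩ _ h
      have h2 : b = b' := (congrArg (fun t : E × E × E => t.2.1) h)
      have h3 : e = e' := (congrArg (fun t : E × E × E => t.2.2) h)
      exact Prod.ext h3 h2
    · rintro ⟨a, b, c⟩ ⟨ha, hb, hc, hsum⟩
      refine ⟨(c, b), ⟨hb, ?_, (hyC c).mpr hc⟩, ?_⟩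
      · have hcb : c + b = a := by
          have h0 : a + b + c = 0 := hsum
          calc c + b = a + a + (c + b) := by rw [addSelf E a, zero_add]
            _ = a + (a + b + c) := by abel
            _ = a := by rw [h0, add_zero]
        rw [hcb]; exact (hxA a).mpr ha
      · show (c + b, b, c) = (a, b, c)
        have hcb : c + b = a := by
          have h0 : a + b + c = 0 := hsum
          calc c + b = a + a + (c + b) := by rw [addSelf E a, zero_add]
            _ = a + (a + b + c) := by abel
            _ = a := by rw [h0, add_zero]
        rw [hcb]
  refine ⟨key, ?_⟩
  rintro M ⟨x, y, hx, hy, rfl⟩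
  letI := twAction E X B
  have horb : orbEB E X B x y = AddAction.orbit (E × ↥B) (x, y) := by
    ext q
    constructor
    · rintro ⟨e, b, hb, rfl⟩
      exact ⟨(e, ⟨b, hb⟩), rfl⟩
    · rintro ⟨⟨e, b⟩, rfl⟩
      exact ⟨e, ↑b, b.2, rfl⟩
  -- equiv between stabilizer and UABC
  have hbij := key x y hx hy
  have hstab : AddAction.stabilizer (E × ↥B) (x, y) ≃
      ↥(UABC E A B C) := by
    have e1 : ↥(AddAction.stabilizer (E × ↥B) (x, y)) ≃
        ↥{p : E × E | p.2 ∈ B ∧ (p.1 + p.2) +ᵥ x = x ∧ p.1 +ᵥ y = y} := by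
      refine ⟨fun g => ⟨(g.1.1, ↑g.1.2), ?_⟩, fun p => ⟨(p.1.1, ⟨p.1.2, p.2.1⟩), ?_⟩,
        fun g => ?_, fun p => ?_⟩
      · obtain ⟨⟨e, b⟩, hg⟩ := g
        have hg' : ((e + ↑b) +ᵥ x, e +ᵥ y) = (x, y) := hg
        exact ⟨b.2, congrArg Prod.fst hg', congrArg Prod.snd hg'⟩
      · obtain ⟨⟨e, b⟩, hb, h1, h2⟩ := p
        show ((e + b) +ᵥ x, e +ᵥ y) = (x, y)
        exact Prod.ext h1 h2
      · rfl
      · rfl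
    exact e1.trans (hbij.equiv _)
  have hMcard : Nat.card ↥(orbEB E X B x y) = Nat.card ↥(AddAction.orbit (E × ↥B) (x, y)) := by
    rw [horb]
  haveI : Fintype ↥(AddAction.orbit (E × ↥B) (x, y)) := Fintype.ofFinite _
  haveI : Fintype ↥(AddAction.stabilizer (E × ↥B) (x, y)) := Fintype.ofFinite _
  have hOS := AddAction.card_orbit_mul_card_stabilizer_eq_card_addGroup (E × ↥B) (x, y)
  have hU : Nat.card ↥(AddAction.stabilizer (E × ↥B) (x, y)) = Nat.card ↥(UABC E A B C) :=
    Nat.card_congr hstab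
  have hOS' : Nat.card ↥(AddAction.orbit (E × ↥B) (x, y)) * Nat.card ↥(UABC E A B C)
      = Nat.card E * Nat.card ↥B := by
    rw [← hU]
    simpa [Nat.card_eq_fintype_card, Fintype.card_prod] using hOS
  have hUpos : (0 : ℚ) < (Nat.card ↥(UABC E A B C) : ℚ) := by
    have : Nonempty ↥(UABC E A B C) :=
      ⟨⟨(0, 0, 0), zero_mem A, zero_mem B, zero_mem C, by simp⟩⟩
    have := Nat.card_pos (α := ↥(UABC E A B C))
    exact_mod_cast this
  rw [hMcard, eq_div_iff (ne_of_gt hUpos)]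
  exact_mod_cast hOS'

end Lusztig
end
end

section
/- Let A, B, C be subspaces of E, let 𝒪 be an E-orbit in X²_{AB} and 𝒪' an E-orbit in X²_{BC} with p₂𝒪 = p₁𝒪' = o'. For (x,z) ∈ 𝒪 • 𝒪', the nonempty set Z_{x,z} := {y ∈ o' : (x,y) ∈ 𝒪, (y,z) ∈ 𝒪'} has cardinality |Z_{x,z}| = |U_{ABC}| / (|A∩B| · |B∩C|); in particular this cardinality is independent of (x,z). -/
open scoped Classical

set_option linter.unusedSectionVars false

noncomputable section

namespace Lusztig

variable (E X : Type) [AddCommGroup E] [Module (ZMod 2) E] [Fintype E]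
  [Fintype X] [AddAction E X]

/-! Fix `w ∈ Z_{x,z}`. Then `𝒪` and `𝒪'` are the diagonal orbits of `(x, w)` and `(w, z)`, so
`y ∈ Z_{x,z}` iff `y = a + w = c + w` with `a ∈ A = Stab x` and `c ∈ C = Stab z`. Let `U_{ABC}`
act on `X` through its first coordinate: `Z_{x,z}` is the orbit of `w`, and since `Stab w = B`
the stabilizer of `w` is `{(a, -a-c, c) : a ∈ A ∩ B, c ∈ B ∩ C}`. The orbit-stabilizer theorem
gives `|U_{ABC}| = |Z_{x,z}| · |A ∩ B| · |B ∩ C|`. -/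

section SumZeroTriples

variable {G Y : Type*} [AddCommGroup G] [AddAction G Y] (A B C : AddSubgroup G)

def sumZeroTriples : AddSubgroup (G × G × G) where
  carrier := {t | t.1 ∈ A ∧ t.2.1 ∈ B ∧ t.2.2 ∈ C ∧ t.1 + t.2.1 + t.2.2 = 0}
  add_mem' := by
    rintro s t ⟨hsA, hsB, hsC, hs⟩ ⟨htA, htB, htC, ht⟩
    refine ⟨A.add_mem hsA htA, B.add_mem hsB htB, C.add_mem hsC htC, ?_⟩
    calc (s + t).1 + (s + t).2.1 + (s + t).2.2
        = (s.1 + s.2.1 + s.2.2) + (t.1 + t.2.1 + t.2.2) := by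
          simp only [Prod.fst_add, Prod.snd_add]; abel
      _ = 0 := by rw [hs, ht, add_zero]
  zero_mem' := ⟨A.zero_mem, B.zero_mem, C.zero_mem, by simp⟩
  neg_mem' := by
    rintro t ⟨hA, hB, hC, h⟩
    refine ⟨A.neg_mem hA, B.neg_mem hB, C.neg_mem hC, ?_⟩
    simp only [Prod.fst_neg, Prod.snd_neg, ← neg_add, h, neg_zero]

abbrev sumZeroTriplesFstAction : AddAction (sumZeroTriples A B C) Y :=
  AddAction.compHom Y ((AddMonoidHom.fst G (G × G)).comp (sumZeroTriples A B C).subtype)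

attribute [local instance] sumZeroTriplesFstAction

variable {A B C}

theorem vadd_eq_vadd_iff_sub_mem_stabilizer {w : Y} (g h : G) :
    g +ᵥ w = h +ᵥ w ↔ g - h ∈ AddAction.stabilizer G w := by
  rw [AddAction.mem_stabilizer_iff, sub_eq_neg_add, add_vadd, neg_vadd_eq_iff, eq_comm]

theorem orbit_sumZeroTriples {w : Y} (hw : AddAction.stabilizer G w = B) :
    AddAction.orbit (sumZeroTriples A B C) w =
      {y | (∃ a ∈ A, a +ᵥ w = y) ∧ ∃ c ∈ C, c +ᵥ w = y} := by
  ext y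
  constructor
  · rintro ⟨⟨⟨a, b, c⟩, hA, hB, hC, hsum⟩, rfl⟩
    refine ⟨⟨a, hA, rfl⟩, -c, C.neg_mem hC, ?_⟩
    have hb : -c - a = b := by
      rw [← sub_eq_zero, ← neg_eq_zero, ← hsum]
      abel
    change -c +ᵥ w = a +ᵥ w
    rwa [vadd_eq_vadd_iff_sub_mem_stabilizer, hw, hb]
  · rintro ⟨⟨a, hA, rfl⟩, c, hC, hca⟩
    have hB : c - a ∈ B := hw ▸ (vadd_eq_vadd_iff_sub_mem_stabilizer c a).1 hca
    exact ⟨⟨(a, c - a, -c), hA, hB, C.neg_mem hC, show a + (c - a) + -c = 0 by abel⟩, rfl⟩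

theorem mem_stabilizer_sumZeroTriples_iff {w : Y} (hw : AddAction.stabilizer G w = B)
    (t : sumZeroTriples A B C) :
    t ∈ AddAction.stabilizer (sumZeroTriples A B C) w ↔ (t : G × G × G).1 ∈ B := by
  change (t : G × G × G).1 +ᵥ w = w ↔ _
  rw [← AddAction.mem_stabilizer_iff, hw]

def stabilizerSumZeroTriplesEquiv {w : Y} (hw : AddAction.stabilizer G w = B) :
    AddAction.stabilizer (sumZeroTriples A B C) w ≃ ↥(A ⊓ B) × ↥(B ⊓ C) where
  toFun s :=
    have ht := s.1.2
    have haB := (mem_stabilizer_sumZeroTriples_iff hw s.1).1 s.2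
    (⟨s.1.1.1, AddSubgroup.mem_inf.2 ⟨ht.1, haB⟩⟩,
      ⟨s.1.1.2.2, AddSubgroup.mem_inf.2 ⟨eq_neg_of_add_eq_zero_right ht.2.2.2 ▸
        B.neg_mem (B.add_mem haB ht.2.1), ht.2.2.1⟩⟩)
  invFun p :=
    have ha := AddSubgroup.mem_inf.1 p.1.2
    have hc := AddSubgroup.mem_inf.1 p.2.2
    ⟨⟨((p.1 : G), -((p.1 : G) + p.2), (p.2 : G)), ha.1, B.neg_mem (B.add_mem ha.2 hc.1), hc.2,
      show (p.1 : G) + -((p.1 : G) + p.2) + p.2 = 0 by abel⟩,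
      (mem_stabilizer_sumZeroTriples_iff hw _).2 ha.2⟩
  left_inv s := by
    refine Subtype.ext (Subtype.ext (Prod.ext rfl (Prod.ext ?_ rfl)))
    obtain ⟨-, -, -, hsum⟩ := s.1.2
    exact neg_eq_iff_add_eq_zero.2 ((add_right_comm _ _ _).trans hsum)
  right_inv _ := rfl

theorem card_sumZeroTriples {w : Y} (hw : AddAction.stabilizer G w = B) :
    Nat.card (sumZeroTriples A B C) =
      Nat.card {y | (∃ a ∈ A, a +ᵥ w = y) ∧ ∃ c ∈ C, c +ᵥ w = y} *
        (Nat.card ↥(A ⊓ B) * Nat.card ↥(B ⊓ C)) := by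
  rw [← Nat.card_congr (AddAction.orbitProdStabilizerEquivAddGroup (sumZeroTriples A B C) w),
    Nat.card_prod, Nat.card_congr (stabilizerSumZeroTriplesEquiv hw), Nat.card_prod,
    orbit_sumZeroTriples hw]

end SumZeroTriples

variable {E X}

theorem mem_XA_iff {A : Submodule (ZMod 2) E} {x : X} :
    x ∈ XA E X A ↔ AddAction.stabilizer E x = A.toAddSubgroup :=
  ⟨fun h => SetLike.coe_injective h, fun h => congrArg SetLike.coe h⟩

theorem IsOrb2.eq_orb2_of_mem {A B : Submodule (ZMod 2) E} {O : Set (X × X)}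
    (hO : IsOrb2 E X A B O) {x y : X} (hxy : (x, y) ∈ O) :
    x ∈ XA E X A ∧ y ∈ XA E X B ∧ O = orb2 E X x y := by
  obtain ⟨x₀, y₀, hx₀, hy₀, rfl⟩ := hO
  obtain ⟨g, hg⟩ := hxy
  obtain ⟨rfl, rfl⟩ := Prod.mk.inj hg
  refine ⟨?_, ?_, ?_⟩
  · rwa [mem_XA_iff, AddAction.stabilizer_vadd_eq_right, ← mem_XA_iff]
  · rwa [mem_XA_iff, AddAction.stabilizer_vadd_eq_right, ← mem_XA_iff]
  · ext q
    constructor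
    · rintro ⟨e, rfl⟩
      exact ⟨e - g, by simp only [← add_vadd, sub_add_cancel]⟩
    · rintro ⟨e, rfl⟩
      exact ⟨e + g, by simp only [add_vadd]⟩

theorem mk_mem_orb2_left_iff {x w y : X} :
    (x, y) ∈ orb2 E X x w ↔ ∃ e ∈ AddAction.stabilizer E x, e +ᵥ w = y := by
  constructor
  · rintro ⟨e, he⟩
    obtain ⟨hx, rfl⟩ := Prod.mk.inj he
    exact ⟨e, hx.symm, rfl⟩
  · rintro ⟨e, he, rfl⟩
    exact ⟨e, Prod.ext (AddAction.mem_stabilizer_iff.1 he).symm rfl⟩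

theorem mk_mem_orb2_right_iff {w z y : X} :
    (y, z) ∈ orb2 E X w z ↔ ∃ e ∈ AddAction.stabilizer E z, e +ᵥ w = y := by
  constructor
  · rintro ⟨e, he⟩
    obtain ⟨rfl, hz⟩ := Prod.mk.inj he
    exact ⟨e, hz.symm, rfl⟩
  · rintro ⟨e, he, rfl⟩
    exact ⟨e, Prod.ext rfl (AddAction.mem_stabilizer_iff.1 he).symm⟩

theorem statement7_general (A B C : Submodule (ZMod 2) E) (O O' : Set (X × X))
    (hO : IsOrb2 E X A B O) (hO' : IsOrb2 E X B C O')
    (x z : X) (hxz : (x, z) ∈ bullet X O O') :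
    {y : X | y ∈ p2 X O ∧ (x, y) ∈ O ∧ (y, z) ∈ O'}.Nonempty ∧
    (Nat.card ↥{y : X | y ∈ p2 X O ∧ (x, y) ∈ O ∧ (y, z) ∈ O'} : ℚ) =
      (Nat.card ↥(UABC E A B C) : ℚ)
        / ((Nat.card ↥(A ⊓ B) : ℚ) * (Nat.card ↥(B ⊓ C) : ℚ)) := by
  obtain ⟨w, hxw, hwz⟩ : ∃ w, (x, w) ∈ O ∧ (w, z) ∈ O' := hxz
  obtain ⟨hx, hw, rfl⟩ := hO.eq_orb2_of_mem hxw
  obtain ⟨-, hz, rfl⟩ := hO'.eq_orb2_of_mem hwz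
  have hZ : {y : X | y ∈ p2 X (orb2 E X x w) ∧ (x, y) ∈ orb2 E X x w ∧ (y, z) ∈ orb2 E X w z} =
      {y | (∃ a ∈ A.toAddSubgroup, a +ᵥ w = y) ∧ ∃ c ∈ C.toAddSubgroup, c +ᵥ w = y} := by
    ext y
    refine (and_iff_right_of_imp fun h => ⟨_, h.1, rfl⟩).trans ?_
    rw [mk_mem_orb2_left_iff, mk_mem_orb2_right_iff, mem_XA_iff.1 hx, mem_XA_iff.1 hz]
    rfl
  refine ⟨⟨w, ⟨_, hxw, rfl⟩, hxw, hwz⟩, ?_⟩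
  have hcard : Nat.card (UABC E A B C) = _ :=
    card_sumZeroTriples (A := A.toAddSubgroup) (C := C.toAddSubgroup) (mem_XA_iff.1 hw)
  have hAB : (Nat.card ↥(A ⊓ B) : ℚ) ≠ 0 := Nat.cast_ne_zero.2 Nat.card_pos.ne'
  have hBC : (Nat.card ↥(B ⊓ C) : ℚ) ≠ 0 := Nat.cast_ne_zero.2 Nat.card_pos.ne'
  rw [hZ, hcard, eq_div_iff (mul_ne_zero hAB hBC)]
  push_cast
  rfl

/-- for `(x,z) ∈ 𝒪 • 𝒪'`, the set `Z_{x,z}` is nonempty and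
`|Z_{x,z}| = |U_{ABC}|/(|A∩B|·|B∩C|)`, independently of `(x,z)`. -/
theorem statement7 (A B C : Submodule (ZMod 2) E) (O O' : Set (X × X))
    (hO : IsOrb2 E X A B O) (hO' : IsOrb2 E X B C O')
    (h : p2 X O = p1 X O') (x z : X) (hxz : (x, z) ∈ bullet X O O') :
    {y : X | y ∈ p2 X O ∧ (x, y) ∈ O ∧ (y, z) ∈ O'}.Nonempty ∧
    (Nat.card ↥{y : X | y ∈ p2 X O ∧ (x, y) ∈ O ∧ (y, z) ∈ O'} : ℚ) =
      (Nat.card ↥(UABC E A B C) : ℚ)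
        / ((Nat.card ↥(A ⊓ B) : ℚ) * (Nat.card ↥(B ⊓ C) : ℚ)) :=
  statement7_general A B C O O' hO hO' x z hxz

end Lusztig
end
end

section
/- Let A, B, C be subspaces of a finite-dimensional vector space E over ℤ/2 and set U_{ABC} := {(a,b,c) ∈ A × B × C : a + b + c = 0}. Then N_{A,B,C} := |U_{ABC}| · |A∩B∩C| / (|A∩B| · |B∩C| · |A∩C|) is a positive integer, and moreover a power of 2. -/
open scoped Classical

set_option linter.unusedSectionVars false

noncomputable section

namespace Lusztig

variable (E X : Type) [AddCommGroup E] [Module (ZMod 2) E] [Fintype E]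
  [Fintype X] [AddAction E X]

-- The summation map `A × B × C → E`.
def sumMap (A B C : Submodule (ZMod 2) E) : (↥A × ↥B × ↥C) →ₗ[ZMod 2] E where
  toFun t := (t.1 : E) + (t.2.1 : E) + (t.2.2 : E)
  map_add' := by
    intro x y
    simp only [Prod.fst_add, Prod.snd_add, Submodule.coe_add]
    abel
  map_smul' := by intro c x; push_cast; simp [smul_add]

lemma sumMap_range (A B C : Submodule (ZMod 2) E) :
    LinearMap.range (sumMap E A B C) = A ⊔ B ⊔ C := by
  apply le_antisymm
  · rintro x ⟨⟨a, b, c⟩, rfl⟩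
    exact add_mem (add_mem (Submodule.mem_sup_left (Submodule.mem_sup_left a.2))
      (Submodule.mem_sup_left (Submodule.mem_sup_right b.2)))
      (Submodule.mem_sup_right c.2)
  · refine sup_le (sup_le ?_ ?_) ?_ <;> intro x hx
    · exact ⟨(⟨x, hx⟩, 0, 0), by simp [sumMap]⟩
    · exact ⟨(0, ⟨x, hx⟩, 0), by simp [sumMap]⟩
    · exact ⟨(0, 0, ⟨x, hx⟩), by simp [sumMap]⟩

/-- `UABC` is in bijection with the kernel of the summation map. -/
def kerEquivUABC (A B C : Submodule (ZMod 2) E) :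
    ↥(LinearMap.ker (sumMap E A B C)) ≃ ↥(UABC E A B C) where
  toFun t := ⟨((t.1.1 : E), (t.1.2.1 : E), (t.1.2.2 : E)),
    t.1.1.2, t.1.2.1.2, t.1.2.2.2, t.2⟩
  invFun t := ⟨(⟨t.1.1, t.2.1⟩, ⟨t.1.2.1, t.2.2.1⟩, ⟨t.1.2.2, t.2.2.2.1⟩), t.2.2.2.2⟩
  left_inv t := rfl
  right_inv t := rfl

lemma card_submodule (P : Submodule (ZMod 2) E) :
    Nat.card ↥P = 2 ^ Module.finrank (ZMod 2) ↥P := by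
  have : Fintype ↥P := Fintype.ofFinite _
  rw [Nat.card_eq_fintype_card, Module.card_eq_pow_finrank (K := ZMod 2), ZMod.card]

/-- `N_{A,B,C} = |U_{ABC}|·|A∩B∩C|/(|A∩B|·|B∩C|·|A∩C|)` is a positive
integer, in fact a power of `2`. -/
theorem statement8 (A B C : Submodule (ZMod 2) E) :
    ∃ k : ℕ,
      (Nat.card ↥(UABC E A B C) : ℚ) * (Nat.card ↥(A ⊓ B ⊓ C) : ℚ)
          / ((Nat.card ↥(A ⊓ B) : ℚ) * (Nat.card ↥(B ⊓ C) : ℚ) * (Nat.card ↥(A ⊓ C) : ℚ))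
        = 2 ^ k := by
  have hEfin : Module.Finite (ZMod 2) E := Module.Finite.of_finite
  set dA := Module.finrank (ZMod 2) ↥A
  set dB := Module.finrank (ZMod 2) ↥B
  set dC := Module.finrank (ZMod 2) ↥C
  set dAB := Module.finrank (ZMod 2) ↥(A ⊓ B)
  set dBC := Module.finrank (ZMod 2) ↥(B ⊓ C)
  set dAC := Module.finrank (ZMod 2) ↥(A ⊓ C)
  set dABC := Module.finrank (ZMod 2) ↥(A ⊓ B ⊓ C)
  set dS := Module.finrank (ZMod 2) ↥(A ⊔ B ⊔ C)
  set dU := Module.finrank (ZMod 2) ↥(LinearMap.ker (sumMap E A B C))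
  -- rank-nullity
  have hU : dS + dU = dA + dB + dC := by
    have := LinearMap.finrank_range_add_finrank_ker (sumMap E A B C)
    rw [sumMap_range] at this
    simp only [Module.finrank_prod] at this
    omega
  -- dimension inequality
  have h1 : Module.finrank (ZMod 2) ↥(A ⊔ B) + dAB = dA + dB :=
    Submodule.finrank_sup_add_finrank_inf_eq A B
  have h2 : dS + Module.finrank (ZMod 2) ↥((A ⊔ B) ⊓ C)
      = Module.finrank (ZMod 2) ↥(A ⊔ B) + dC :=
    Submodule.finrank_sup_add_finrank_inf_eq (A ⊔ B) C
  have h4 : (A ⊓ C) ⊓ (B ⊓ C) = A ⊓ B ⊓ C := by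
    ext x; simp only [Submodule.mem_inf]; tauto
  have h3 : Module.finrank (ZMod 2) ↥((A ⊓ C) ⊔ (B ⊓ C)) + dABC = dAC + dBC := by
    have := Submodule.finrank_sup_add_finrank_inf_eq (A ⊓ C) (B ⊓ C)
    rw [h4] at this
    exact this
  have h5 : Module.finrank (ZMod 2) ↥((A ⊓ C) ⊔ (B ⊓ C))
      ≤ Module.finrank (ZMod 2) ↥((A ⊔ B) ⊓ C) :=
    Submodule.finrank_mono (sup_le (inf_le_inf_right C le_sup_left)
      (inf_le_inf_right C le_sup_right))
  have hineq : dAB + dBC + dAC + dS ≤ dA + dB + dC + dABC := by omega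
  -- choose k
  refine ⟨dU + dABC - (dAB + dBC + dAC), ?_⟩
  have hk : dU + dABC = (dU + dABC - (dAB + dBC + dAC)) + (dAB + dBC + dAC) := by omega
  -- cardinalities
  have hcardU : Nat.card ↥(UABC E A B C) = 2 ^ dU := by
    rw [Nat.card_congr (kerEquivUABC E A B C).symm]
    have : Fintype ↥(LinearMap.ker (sumMap E A B C)) := Fintype.ofFinite _
    rw [Nat.card_eq_fintype_card, Module.card_eq_pow_finrank (K := ZMod 2), ZMod.card]
  rw [hcardU, card_submodule E (A ⊓ B ⊓ C), card_submodule E (A ⊓ B),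
    card_submodule E (B ⊓ C), card_submodule E (A ⊓ C)]
  push_cast
  rw [div_eq_iff (by positivity)]
  rw [← pow_add, ← pow_add, ← pow_add, ← pow_add]
  exact congrArg (fun n : ℕ => (2:ℚ) ^ n) (by omega)

end Lusztig
end
end

section
/- Let A, B be subspaces of E, let o, o' be E-orbits contained in X_A, and let γ : o → o' be an E-equivariant bijection; set 𝒪_γ := {(γ(x), x) : x ∈ o}, an E-orbit in X²_{AA}. Then for any subspace C, any E × B-orbit 𝓜 on X²_{AC} with p₁𝓜 = o and any ε ∈ (A∩C)*, one has [𝒪_γ]^0 ⋆ [𝓜]^ε = [𝓜']^ε where 𝓜' := {(γ(x), z) : (x,z) ∈ 𝓜}; consequently left multiplication by [𝒪_γ]^0 defines a ℂ-linear isomorphism [[oB]] → [[o'B]] carrying 𝓑_{oB} onto 𝓑_{o'B}. -/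
open scoped Classical

set_option linter.unusedSectionVars false

noncomputable section

namespace Lusztig

variable (E X : Type) [AddCommGroup E] [Module (ZMod 2) E] [Fintype E]
  [Fintype X] [AddAction E X]

/-!
At `((x, z), η)`, the product `[Ξ]^ε₁ ⋆ [Ξ']^ε₂` is `|A ∩ B ∩ C| / |A ∩ C|` times the number of
`y ∈ X_B` with `(x, y) ∈ Ξ` and `(y, z) ∈ Ξ'` if the three characters sum to zero on `A ∩ B ∩ C`,
and `0` otherwise. For `Ξ = 𝒪_γ`, `ε₁ = 0` and `B = A` the only such `y` is `γ⁻¹ x`, the factor is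
`1` and the condition says `η = ε₂`; this is `[𝒪_γ]^0 ⋆ [𝓜]^ε = [𝓜']^ε`. Equivariance of `γ`
makes `𝓜'` again an `E × B`-orbit, now over `o'`. The inverse `γ⁻¹ : o' → o` is equivariant
too, so left multiplication by `[𝒪_{γ⁻¹}]^0` inverts left multiplication by `[𝒪_γ]^0` on
`𝓑_{oB}` and `𝓑_{o'B}`, hence on their spans.
-/

lemma exists_linearEquiv_span_of_invOn {R M N : Type*} [Semiring R] [AddCommMonoid M]
    [Module R M] [AddCommMonoid N] [Module R N] (f : M →ₗ[R] N) (g : N →ₗ[R] M) {s : Set M}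
    {t : Set N} (hinv : Set.InvOn g f s t) (hf : Set.MapsTo f s t) (hg : Set.MapsTo g t s) :
    ∃ φ : Submodule.span R s ≃ₗ[R] Submodule.span R t, ∀ m, (φ m : N) = f m := by
  have hf' : ∀ m ∈ Submodule.span R s, f m ∈ Submodule.span R t := fun m hm =>
    Submodule.span_mono hf.image_subset
      ((Submodule.span_image f).symm ▸ Submodule.mem_map_of_mem hm)
  have hg' : ∀ n ∈ Submodule.span R t, g n ∈ Submodule.span R s := fun n hn =>
    Submodule.span_mono hg.image_subset
      ((Submodule.span_image g).symm ▸ Submodule.mem_map_of_mem hn)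
  refine ⟨LinearEquiv.ofLinearMap (f.restrict hf') (g.restrict hg') ?_ ?_, fun _ => rfl⟩
  · ext ⟨n, hn⟩
    exact LinearMap.eqOn_span (f := f ∘ₗ g) (g := LinearMap.id) (fun n hn => hinv.2 hn) hn
  · ext ⟨m, hm⟩
    exact LinearMap.eqOn_span (f := g ∘ₗ f) (g := LinearMap.id) (fun m hm => hinv.1 hm) hm

instance inst_s15 (P : Submodule (ZMod 2) E) : Fintype (Dl E P) :=
  @Fintype.ofFinite _ (Finite.of_injective _ DFunLike.coe_injective)

section

variable {E X}

lemma res_zero {P Q : Submodule (ZMod 2) E} (h : P ≤ Q) : res E h 0 = 0 :=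
  LinearMap.zero_comp _

lemma res_add_res_eq_zero_iff {A C : Submodule (ZMod 2) E} {ε η : Dl E (A ⊓ C)} :
    res E (leBC E A A C) ε + res E (leAC E A A C) η = 0 ↔ ε = η := by
  rw [← ZModModule.sub_eq_add, sub_eq_zero]
  refine ⟨fun h => LinearMap.ext fun ⟨e, he⟩ => ?_, fun h => h ▸ rfl⟩
  exact DFunLike.congr_fun h ⟨e, by simpa [inf_idem] using he⟩

def convLeft (A B C : Submodule (ZMod 2) E) (f : (X × X) × Dl E (A ⊓ B) → ℂ) :
    ((X × X) × Dl E (B ⊓ C) → ℂ) →ₗ[ℂ] ((X × X) × Dl E (A ⊓ C) → ℂ) where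
  toFun := conv E X A B C f
  map_add' g h := by
    funext p
    simp only [conv, finsum_eq_sum_of_fintype, finsum_eq_if, Pi.add_apply, mul_add]
    simp only [← add_div, ← add_mul, ← Finset.sum_add_distrib, ← ite_add_zero]
  map_smul' c g := by
    funext p
    simp only [conv, finsum_eq_sum_of_fintype, finsum_eq_if, Pi.smul_apply, smul_eq_mul,
      RingHom.id_apply, mul_div_assoc, ← mul_assoc c, Finset.mul_sum, mul_ite, mul_zero]
    simp only [mul_assoc, mul_left_comm c]

lemma conv_zero_left (A B C : Submodule (ZMod 2) E) (g : (X × X) × Dl E (B ⊓ C) → ℂ) :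
    conv E X A B C 0 g = 0 := by
  funext p
  simp [conv]

lemma conv_br_br (A B C : Submodule (ZMod 2) E) (Ξ Ξ' : Set (X × X)) (ε₁ : Dl E (A ⊓ B))
    (ε₂ : Dl E (B ⊓ C)) (x z : X) (η : Dl E (A ⊓ C)) :
    conv E X A B C (br E X A B Ξ ε₁) (br E X B C Ξ' ε₂) ((x, z), η) =
      if res E (leAB E A B C) ε₁ + res E (leBC E A B C) ε₂ + res E (leAC E A B C) η = 0 then
        ((Finset.univ.filter fun y => y ∈ XA E X B ∧ (x, y) ∈ Ξ ∧ (y, z) ∈ Ξ').card : ℂ) *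
          Nat.card ↥(A ⊓ B ⊓ C) / Nat.card ↥(A ⊓ C)
      else 0 := by
  have hdual : ∀ y : X, (∑ ε₁' : Dl E (A ⊓ B), ∑ ε₂' : Dl E (B ⊓ C),
      if res E (leAB E A B C) ε₁' + res E (leBC E A B C) ε₂' + res E (leAC E A B C) η = 0
      then br E X A B Ξ ε₁ ((x, y), ε₁') * br E X B C Ξ' ε₂ ((y, z), ε₂') else 0) =
      if res E (leAB E A B C) ε₁ + res E (leBC E A B C) ε₂ + res E (leAC E A B C) η = 0
      then if (x, y) ∈ Ξ ∧ (y, z) ∈ Ξ' then 1 else 0 else 0 := by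
    intro y
    rw [Fintype.sum_eq_single ε₁, Fintype.sum_eq_single ε₂]
    · by_cases (x, y) ∈ Ξ <;> by_cases (y, z) ∈ Ξ' <;> simp [br, *]
    all_goals intros; simp [br, *]
  simp only [conv, finsum_eq_sum_of_fintype, finsum_eq_if, hdual]
  split_ifs <;> simp [Finset.sum_ite, Finset.filter_filter]

def graphSet (o : Set X) (γ : X → X) : Set (X × X) := {q | ∃ x ∈ o, q = (γ x, x)}

def pushFst (γ : X → X) (M : Set (X × X)) : Set (X × X) := {q | ∃ p ∈ M, q = (γ p.1, p.2)}

lemma card_filter_graphSet {A : Submodule (ZMod 2) E} {o : Set X} (hoA : o ⊆ XA E X A)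
    {γ : X → X} (hγ : Set.InjOn γ o) {M : Set (X × X)} (hM : p1 X M ⊆ o) (x z : X) :
    (Finset.univ.filter fun y => y ∈ XA E X A ∧ (x, y) ∈ graphSet o γ ∧ (y, z) ∈ M).card =
      if (x, z) ∈ pushFst γ M then 1 else 0 := by
  split_ifs with h
  · obtain ⟨⟨w, z'⟩, hw, hxz⟩ := h
    simp only [Prod.mk.injEq] at hxz
    obtain ⟨rfl, rfl⟩ := hxz
    have hwo : w ∈ o := hM ⟨_, hw, rfl⟩
    rw [Finset.card_eq_one]
    refine ⟨w, Finset.eq_singleton_iff_unique_mem.mpr ⟨?_, ?_⟩⟩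
    · simpa [graphSet, hoA hwo, hwo] using hw
    · intro y hy
      obtain ⟨-, -, ⟨y', hy', hxy⟩, hyz⟩ := Finset.mem_filter.mp hy
      simp only [Prod.mk.injEq] at hxy
      obtain ⟨hγy, rfl⟩ := hxy
      exact hγ hy' hwo hγy.symm
  · refine Finset.card_eq_zero.mpr (Finset.filter_eq_empty_iff.mpr ?_)
    rintro y - ⟨-, ⟨y', -, hxy⟩, hyz⟩
    simp only [Prod.mk.injEq] at hxy
    obtain ⟨rfl, rfl⟩ := hxy
    exact h ⟨_, hyz, rfl⟩

lemma conv_br_graphSet (A C : Submodule (ZMod 2) E) {o : Set X} (hoA : o ⊆ XA E X A)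
    {γ : X → X} (hγ : Set.InjOn γ o) {M : Set (X × X)} (hM : p1 X M ⊆ o) (ε : Dl E (A ⊓ C)) :
    conv E X A A C (br E X A A (graphSet o γ) 0) (br E X A C M ε) =
      br E X A C (pushFst γ M) ε := by
  funext ⟨⟨x, z⟩, η⟩
  have hcard : (Nat.card ↥(A ⊓ A ⊓ C) : ℂ) / Nat.card ↥(A ⊓ C) = 1 := by
    rw [inf_idem, div_self (Nat.cast_ne_zero.mpr Nat.card_pos.ne')]
  rw [conv_br_br, card_filter_graphSet hoA hγ hM, res_zero, zero_add, mul_div_assoc, hcard,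
    mul_one]
  simp only [res_add_res_eq_zero_iff]
  by_cases (x, z) ∈ pushFst γ M <;> by_cases ε = η <;> simp [br, eq_comm, *]

lemma conv_bSum_of_conv_br (A B C : Submodule (ZMod 2) E) (f : (X × X) × Dl E (A ⊓ A) → ℂ)
    {M M' : Set (X × X)} (h : ∀ ε, conv E X A A C f (br E X A C M ε) = br E X A C M' ε)
    (α : Dl E (A ⊓ B ⊓ C)) :
    conv E X A A C f (bSum E X A B C M α) = bSum E X A B C M' α := by
  simp only [bSum, finsum_eq_if, finsum_eq_sum_of_fintype]
  change convLeft A A C f _ = _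
  rw [map_sum]
  refine Finset.sum_congr rfl fun ε _ => ?_
  split_ifs
  · exact h ε
  · exact map_zero _

lemma emb_self (A B : Submodule (ZMod 2) E) (f : (X × X) × Dl E (A ⊓ B) → ℂ) :
    emb E X A B f A B = f := by
  funext p
  simp [emb]

lemma emb_of_ne {A B A' B' : Submodule (ZMod 2) E} (h : ¬(A = A' ∧ B = B'))
    (f : (X × X) × Dl E (A ⊓ B) → ℂ) : emb E X A B f A' B' = 0 :=
  funext fun _ => dif_neg h

lemma mulFF_emb_emb (A B C : Submodule (ZMod 2) E) (f : (X × X) × Dl E (A ⊓ B) → ℂ)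
    (g : (X × X) × Dl E (B ⊓ C) → ℂ) :
    mulFF E X (emb E X A B f) (emb E X B C g) = emb E X A C (conv E X A B C f g) := by
  funext A' C'
  simp only [mulFF, finsum_eq_sum_of_fintype]
  by_cases hAC : A = A' ∧ C = C'
  · obtain ⟨rfl, rfl⟩ := hAC
    rw [Fintype.sum_eq_single B, emb_self, emb_self, emb_self]
    intro B' hB'
    rw [emb_of_ne (fun h => hB' h.2.symm), conv_zero_left]
  · rw [emb_of_ne hAC]
    refine Finset.sum_eq_zero fun B' _ => ?_
    by_cases hA : A = A'
    · rw [emb_of_ne (fun h => hAC ⟨hA, h.2⟩)]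
      exact map_zero (convLeft A' B' C' _)
    · rw [emb_of_ne (fun h => hA h.1), conv_zero_left]

def mulLeft (u : FF E X) : FF E X →ₗ[ℂ] FF E X where
  toFun := mulFF E X u
  map_add' m m' := by
    funext A C
    simp only [mulFF, Pi.add_apply]
    rw [← finsum_add_distrib (Set.toFinite _) (Set.toFinite _)]
    exact finsum_congr fun B => map_add (convLeft A B C (u A B)) (m B C) (m' B C)
  map_smul' c m := by
    funext A C
    simp only [mulFF, Pi.smul_apply, RingHom.id_apply]
    rw [smul_finsum]
    exact finsum_congr fun B => map_smul (convLeft A B C (u A B)) c (m B C)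

lemma mulFF_graphSet_bSum (A B C : Submodule (ZMod 2) E) {o : Set X} (hoA : o ⊆ XA E X A)
    {γ : X → X} (hγ : Set.InjOn γ o) {M : Set (X × X)} (hM : p1 X M ⊆ o)
    (α : Dl E (A ⊓ B ⊓ C)) :
    mulFF E X (emb E X A A (br E X A A (graphSet o γ) 0)) (emb E X A C (bSum E X A B C M α)) =
      emb E X A C (bSum E X A B C (pushFst γ M) α) := by
  rw [mulFF_emb_emb, conv_bSum_of_conv_br A B C _ (conv_br_graphSet A C hoA hγ hM)]

lemma stabSet_apply_eq {o : Set X} (ho : ∀ (e : E), ∀ x ∈ o, e +ᵥ x ∈ o) {γ : X → X}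
    (hγ : Set.InjOn γ o) (hγE : ∀ (e : E), ∀ x ∈ o, γ (e +ᵥ x) = e +ᵥ γ x) {x : X}
    (hx : x ∈ o) : stabSet E X (γ x) = stabSet E X x := by
  ext e
  simp only [stabSet, Set.mem_ofPred_eq, ← hγE e x hx]
  exact hγ.eq_iff (ho e x hx) hx

lemma vadd_mem_XA {A : Submodule (ZMod 2) E} {x : X} (hx : x ∈ XA E X A) (e : E) :
    e +ᵥ x ∈ XA E X A := by
  have h := stabSet_apply_eq (o := Set.univ) (γ := (e +ᵥ ·)) (fun _ _ _ => trivial)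
    (AddAction.injective e).injOn (fun (e' : E) x _ => vadd_comm e e' x) (Set.mem_univ x)
  rwa [XA, Set.mem_ofPred_eq, h]

lemma vadd_mem_orb {x y : X} (hy : y ∈ orb E X x) (e : E) : e +ᵥ y ∈ orb E X x := by
  obtain ⟨e', rfl⟩ := hy
  exact ⟨e + e', vadd_vadd e e' x⟩

lemma orb_subset_XA {A : Submodule (ZMod 2) E} {x : X} (hx : x ∈ XA E X A) :
    orb E X x ⊆ XA E X A := by
  rintro _ ⟨e, rfl⟩
  exact vadd_mem_XA hx e

lemma p1_pushFst (γ : X → X) (M : Set (X × X)) : p1 X (pushFst γ M) = γ '' p1 X M := by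
  ext u
  simp only [p1, pushFst, Set.mem_image, Set.mem_ofPred_eq]
  aesop

lemma pushFst_pushFst {δ γ : X → X} {M : Set (X × X)} (h : Set.LeftInvOn δ γ (p1 X M)) :
    pushFst δ (pushFst γ M) = M := by
  ext ⟨u, v⟩
  constructor
  · rintro ⟨_, ⟨⟨w, v'⟩, hw, rfl⟩, huv⟩
    simp only [Prod.mk.injEq] at huv
    obtain ⟨rfl, rfl⟩ := huv
    rwa [h ⟨_, hw, rfl⟩]
  · intro huv
    exact ⟨(γ u, v), ⟨(u, v), huv, rfl⟩, by rw [h ⟨_, huv, rfl⟩]⟩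

lemma isOrbEB_pushFst {A B C : Submodule (ZMod 2) E} {M : Set (X × X)}
    (hM : IsOrbEB E X A B C M) {o : Set X} (hMo : p1 X M ⊆ o) {γ : X → X}
    (hγA : Set.MapsTo γ o (XA E X A)) (hγE : ∀ (e : E), ∀ x ∈ o, γ (e +ᵥ x) = e +ᵥ γ x) :
    IsOrbEB E X A B C (pushFst γ M) := by
  obtain ⟨x, y, -, hy, rfl⟩ := hM
  have hxo : x ∈ o := hMo ⟨(x, y), ⟨0, 0, B.zero_mem, by simp⟩, rfl⟩
  refine ⟨γ x, y, hγA hxo, hy, ?_⟩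
  ext ⟨u, v⟩
  constructor
  · rintro ⟨_, ⟨e, b, hb, rfl⟩, huv⟩
    exact ⟨e, b, hb, by rw [huv, hγE _ x hxo]⟩
  · rintro ⟨e, b, hb, huv⟩
    exact ⟨_, ⟨e, b, hb, rfl⟩, by rw [huv, hγE _ x hxo]⟩

lemma apply_vadd_of_invOn {o o' : Set X} (ho : ∀ (e : E), ∀ x ∈ o, e +ᵥ x ∈ o) {γ δ : X → X}
    (hinv : Set.InvOn δ γ o o') (hδ : Set.MapsTo δ o' o)
    (hγE : ∀ (e : E), ∀ x ∈ o, γ (e +ᵥ x) = e +ᵥ γ x) :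
    ∀ (e : E), ∀ y ∈ o', δ (e +ᵥ y) = e +ᵥ δ y := by
  intro e y hy
  conv_lhs => rw [← hinv.2 hy, ← hγE e _ (hδ hy)]
  exact hinv.1 (ho e _ (hδ hy))

variable {A B : Submodule (ZMod 2) E} {o o' : Set X} {γ δ : X → X}

lemma mapsTo_mulLeft_BoB (hoA : o ⊆ XA E X A) (ho'A : o' ⊆ XA E X A) (hγ : Set.BijOn γ o o')
    (hγE : ∀ (e : E), ∀ x ∈ o, γ (e +ᵥ x) = e +ᵥ γ x) :
    Set.MapsTo (mulLeft (emb E X A A (br E X A A (graphSet o γ) 0)))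
      (BoB E X A B o) (BoB E X A B o') := by
  intro g hg
  obtain ⟨C, M, α, hM, hMo, rfl⟩ := Set.mem_iUnion.mp hg
  refine Set.mem_iUnion.mpr ⟨C, pushFst γ M, α,
    isOrbEB_pushFst hM hMo.le (hγ.mapsTo.mono_right ho'A) hγE,
    by rw [p1_pushFst, hMo, hγ.image_eq], ?_⟩
  exact mulFF_graphSet_bSum A B C hoA hγ.injOn hMo.le α

lemma leftInvOn_mulLeft_BoB (hoA : o ⊆ XA E X A) (ho'A : o' ⊆ XA E X A)
    (hγ : Set.MapsTo γ o o') (hinv : Set.InvOn δ γ o o') :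
    Set.LeftInvOn (mulLeft (emb E X A A (br E X A A (graphSet o' δ) 0)))
      (mulLeft (emb E X A A (br E X A A (graphSet o γ) 0))) (BoB E X A B o) := by
  intro g hg
  obtain ⟨C, M, α, -, hMo, rfl⟩ := Set.mem_iUnion.mp hg
  have hγM : p1 X (pushFst γ M) ⊆ o' := by
    rw [p1_pushFst, hMo]
    exact hγ.image_subset
  change mulFF E X _ (mulFF E X _ _) = _
  rw [mulFF_graphSet_bSum A B C hoA hinv.1.injOn hMo.le,
    mulFF_graphSet_bSum A B C ho'A hinv.2.injOn hγM, pushFst_pushFst (hMo ▸ hinv.1)]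

end

theorem statement15 (A B : Submodule (ZMod 2) E) (o o' : Set X)
    (ho : ∃ x ∈ XA E X A, o = orb E X x)
    (γ : X → X) (hγ : Set.BijOn γ o o')
    (hγE : ∀ (e : E), ∀ x ∈ o, γ (e +ᵥ x) = e +ᵥ γ x)
    (Oγ : Set (X × X)) (hOγ : Oγ = {q : X × X | ∃ x ∈ o, q = (γ x, x)}) :
    (∀ (C : Submodule (ZMod 2) E) (M : Set (X × X)),
      IsOrbEB E X A B C M → p1 X M = o → ∀ ε : Dl E (A ⊓ C),
        ∀ M' : Set (X × X), M' = {q : X × X | ∃ p ∈ M, q = (γ p.1, p.2)} →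
          conv E X A A C (br E X A A Oγ 0) (br E X A C M ε) = br E X A C M' ε) ∧
    ((fun m => mulFF E X (emb E X A A (br E X A A Oγ 0)) m) '' BoB E X A B o
        = BoB E X A B o') ∧
    ∃ φ : ↥(ooB E X A B o) ≃ₗ[ℂ] ↥(ooB E X A B o'),
      ∀ m : ↥(ooB E X A B o),
        (φ m : FF E X) = mulFF E X (emb E X A A (br E X A A Oγ 0)) ↑m := by
  obtain ⟨x₀, hx₀, ho⟩ := ho
  subst hOγ
  have : Nonempty X := ⟨x₀⟩
  have hoA : o ⊆ XA E X A := ho ▸ orb_subset_XA hx₀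
  have hoE : ∀ (e : E), ∀ x ∈ o, e +ᵥ x ∈ o := fun e x hx => ho ▸ vadd_mem_orb (ho ▸ hx) e
  have ho'A : o' ⊆ XA E X A := by
    rw [← hγ.image_eq]
    rintro _ ⟨x, hx, rfl⟩
    exact (stabSet_apply_eq hoE hγ.injOn hγE hx).trans (hoA hx)
  set δ := Function.invFunOn γ o
  have hinv : Set.InvOn δ γ o o' := hγ.invOn_invFunOn
  have hδ : Set.BijOn δ o' o := hγ.symm hinv.symm
  have hδE := apply_vadd_of_invOn hoE hinv hδ.mapsTo hγE
  have hmaps := mapsTo_mulLeft_BoB (B := B) hoA ho'A hγ hγE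
  have hmaps' := mapsTo_mulLeft_BoB (B := B) ho'A hoA hδ hδE
  have hinvT : Set.InvOn _ _ (BoB E X A B o) (BoB E X A B o') :=
    ⟨leftInvOn_mulLeft_BoB hoA ho'A hγ.mapsTo hinv,
      leftInvOn_mulLeft_BoB ho'A hoA hδ.mapsTo hinv.symm⟩
  refine ⟨fun C M _ hMo ε M' hM' => ?_, (hinvT.bijOn hmaps hmaps').image_eq,
    exists_linearEquiv_span_of_invOn _ _ hinvT hmaps hmaps'⟩
  subst hM'
  exact conv_br_graphSet A C hoA hγ.injOn hMo.le ε

end Lusztig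
end
end
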